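/- Let X be a complete geodesic metric space for which there exists a quasi-isometry from X to a simplicial tree. Then there exists δ > 0 such that X is δ-hyperbolic, i.e. (x,y)_w ≥ min{(x,z)_w,(y,z)_w} − δ for all x,y,z,w ∈ X. -/

import Mathlib

/-!
Sampling a geodesic of `X` at unit steps gives a chain whose image in the tree has steps at most
`K + C`; such a chain passes within `K + C` of every vertex of the tree path between its
endpoints. For four vertices of a tree, the paths of one of the pairings `{xz, yw}`, `{xw, yz}`
come within distance one of each other, so pulling back gives points `u`, `v` on the
corresponding geodesics of `X` at distance at most `δ`. The triangle inequality through `u` and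
`v` then yields the four-point condition
`d(x,y) + d(z,w) ≤ max (d(x,z) + d(y,w)) (d(x,w) + d(y,z)) + 2δ`, which is δ-hyperbolicity.
-/

namespace SimpleGraph

variable {V : Type*} {T : SimpleGraph V}

theorem IsAcyclic.support_subset_of_isPath (hT : T.IsAcyclic) {u v : V} {P : T.Walk u v}
    (hP : P.IsPath) (W : T.Walk u v) : P.support ⊆ W.support := by
  classical
  have hPW : P = W.bypass :=
    congrArg Subtype.val <|
      (hT.subsingleton_path u v).elim ⟨P, hP⟩ ⟨W.bypass, W.bypass_isPath⟩
  exact hPW ▸ W.support_bypass_subset_support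

/-- The path from `b` to `e` is covered by the walk `b → c → a → e`; the first vertex where it
leaves the walk `b → c` lies either on the walk `a → c` or, together with its predecessor, next
to the walk `b → c`. -/
theorem IsAcyclic.crossing_walks_close (hT : T.IsAcyclic) {a b c e : V} (Pac : T.Walk a c)
    {Pbe : T.Walk b e} (hPbe : Pbe.IsPath) (Pae : T.Walk a e) (Pbc : T.Walk b c) :
    (∃ p ∈ Pac.support, ∃ q ∈ Pbe.support, T.dist p q ≤ 1) ∨
      ∃ p ∈ Pae.support, ∃ q ∈ Pbc.support, T.dist p q ≤ 1 := by
  by_cases he : e ∈ Pbc.support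
  · exact Or.inr ⟨e, Pae.end_mem_support, e, he, by simp⟩
  obtain ⟨d, hd, hfst, hsnd⟩ :=
    Pbe.exists_boundary_dart {v | v ∈ Pbc.support} Pbc.start_mem_support he
  have hd' := Pbe.dart_snd_mem_support_of_mem_darts hd
  have hcover := hT.support_subset_of_isPath hPbe (Pbc.append (Pac.reverse.append Pae)) hd'
  simp only [Walk.mem_support_append_iff, Walk.support_reverse, List.mem_reverse] at hcover
  rcases hcover with h | h | h
  · exact absurd h hsnd
  · exact Or.inl ⟨d.snd, h, d.snd, hd', by simp⟩
  · exact Or.inr ⟨d.snd, h, d.fst, hfst, (dist_eq_one_iff_adj.mpr d.adj.symm).le⟩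

theorem IsTree.exists_dist_le_of_mem_support (hT : T.IsTree) {g : ℕ → V} {M : ℝ}
    (hstep : ∀ i, (T.dist (g i) (g (i + 1)) : ℝ) ≤ M) {n : ℕ} {P : T.Walk (g 0) (g n)}
    (hP : P.IsPath) {p : V} (hp : p ∈ P.support) : ∃ i ≤ n, (T.dist (g i) p : ℝ) ≤ M := by
  classical
  induction n generalizing p with
  | zero =>
    obtain rfl : p = g 0 := by
      simpa [Walk.nil_iff_support_eq.mp (Walk.isPath_iff_nil.mp hP)] using hp
    exact ⟨0, le_rfl, by simpa using (Nat.cast_nonneg _).trans (hstep 0)⟩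
  | succ n ih =>
    obtain ⟨R, hR, -⟩ := hT.connected.exists_path_of_dist (g 0) (g n)
    obtain ⟨Q, hQ⟩ := hT.connected.exists_walk_length_eq_dist (g n) (g (n + 1))
    rcases (Walk.mem_support_append_iff R Q).mp
        (hT.isAcyclic.support_subset_of_isPath hP (R.append Q) hp) with hpR | hpQ
    · obtain ⟨i, hi, hdist⟩ := ih hR hpR
      exact ⟨i, hi.trans n.le_succ, hdist⟩
    · refine ⟨n, n.le_succ, le_trans ?_ (hstep n)⟩
      exact_mod_cast hQ ▸ (dist_le (Q.takeUntil p hpQ)).trans (Q.length_takeUntil_le_length hpQ)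

end SimpleGraph

section Geodesic

variable {X : Type*} [PseudoMetricSpace X]

def JoinedByGeodesic (x z : X) : Prop :=
  ∃ σ : ℝ → X, σ 0 = x ∧ σ (dist x z) = z ∧
    ∀ s ∈ Set.Icc (0:ℝ) (dist x z), ∀ t ∈ Set.Icc (0:ℝ) (dist x z),
      dist (σ s) (σ t) = |s - t|

theorem dist_add_dist_le_of_between {x y z w u v : X} (hu : dist x u + dist u z = dist x z)
    (hv : dist y v + dist v w = dist y w) :
    dist x y + dist z w ≤ dist x z + dist y w + 2 * dist u v := by
  linarith [dist_triangle4 x u v y, dist_triangle4 z u v w, dist_comm z u, dist_comm v y]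

theorem JoinedByGeodesic.exists_unit_chain {x z : X} (hxz : JoinedByGeodesic x z) :
    ∃ (n : ℕ) (u : ℕ → X), u 0 = x ∧ u n = z ∧ (∀ i, dist (u i) (u (i + 1)) ≤ 1) ∧
      ∀ i, dist x (u i) + dist (u i) z = dist x z := by
  obtain ⟨σ, hσ0, hσL, hσ⟩ := hxz
  set L := dist x z
  have hL : 0 ≤ L := dist_nonneg
  have hmem : ∀ i : ℕ, min (i : ℝ) L ∈ Set.Icc 0 L :=
    fun i => ⟨le_min i.cast_nonneg hL, min_le_right _ _⟩
  refine ⟨⌈L⌉₊, fun i => σ (min i L), by simp [hσ0, hL], by simp [Nat.le_ceil, hσL],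
    fun i => ?_, fun i => ?_⟩
  · rw [hσ _ (hmem i) _ (hmem (i + 1))]
    calc _ ≤ max |(i : ℝ) - (i + 1 : ℕ)| |L - L| := abs_min_sub_min_le_max _ _ _ _
      _ = 1 := by simp
  · rw [← hσ0, ← hσL]
    rw [hσ 0 ⟨le_rfl, hL⟩ _ (hmem i), hσ _ (hmem i) L ⟨hL, le_rfl⟩,
      abs_of_nonpos (by linarith [(hmem i).1]), abs_of_nonpos (by linarith [(hmem i).2])]
    ring

end Geodesic

section TreeQuasiIsometry

variable {X : Type*} [PseudoMetricSpace X] {V : Type*} {T : SimpleGraph V}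

theorem exists_between_dist_le_of_mem_path (hT : T.IsTree) {f : X → V} {K C : ℝ}
    (hK : 0 ≤ K) (hf : ∀ a b, (T.dist (f a) (f b) : ℝ) ≤ K * dist a b + C) {x z : X}
    (hxz : JoinedByGeodesic x z) {P : T.Walk (f x) (f z)} (hP : P.IsPath) {p : V}
    (hp : p ∈ P.support) :
    ∃ u, dist x u + dist u z = dist x z ∧ (T.dist (f u) p : ℝ) ≤ K + C := by
  obtain ⟨n, u, hu0, hun, hstep, hbetween⟩ := hxz.exists_unit_chain
  have hstepT : ∀ i, (T.dist (f (u i)) (f (u (i + 1))) : ℝ) ≤ K + C := fun i =>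
    calc _ ≤ K * dist (u i) (u (i + 1)) + C := hf _ _
      _ ≤ K * 1 + C := by gcongr; exact hstep i
      _ = K + C := by ring
  have hP' : (P.copy (congrArg f hu0).symm (congrArg f hun).symm).IsPath := by simpa using hP
  obtain ⟨i, -, hi⟩ := hT.exists_dist_le_of_mem_support hstepT hP' (by simpa using hp)
  exact ⟨u i, hbetween i, hi⟩

theorem exists_close_between_of_close_paths (hT : T.IsTree) {f : X → V} {K C : ℝ} (hK : 0 < K)
    (hf : ∀ a b, dist a b / K - C ≤ (T.dist (f a) (f b) : ℝ) ∧
      (T.dist (f a) (f b) : ℝ) ≤ K * dist a b + C)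
    {x y z w : X} (hxz : JoinedByGeodesic x z) (hyw : JoinedByGeodesic y w)
    {Pxz : T.Walk (f x) (f z)} (hPxz : Pxz.IsPath) {Pyw : T.Walk (f y) (f w)}
    (hPyw : Pyw.IsPath) (hclose : ∃ p ∈ Pxz.support, ∃ q ∈ Pyw.support, T.dist p q ≤ 1) :
    ∃ u v, dist x u + dist u z = dist x z ∧ dist y v + dist v w = dist y w ∧
      dist u v ≤ K * (2 * (K + C) + 1 + C) := by
  obtain ⟨p, hp, q, hq, hpq⟩ := hclose
  have hupper := fun a b => (hf a b).2
  obtain ⟨u, hu, hup⟩ := exists_between_dist_le_of_mem_path hT hK.le hupper hxz hPxz hp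
  obtain ⟨v, hv, hvq⟩ := exists_between_dist_le_of_mem_path hT hK.le hupper hyw hPyw hq
  refine ⟨u, v, hu, hv, ?_⟩
  have htri : T.dist (f u) (f v) ≤ T.dist (f u) p + T.dist p q + T.dist (f v) q := by
    have := hT.connected.dist_triangle (u := f u) (v := p) (w := f v)
    have := hT.connected.dist_triangle (u := p) (v := q) (w := f v)
    rw [SimpleGraph.dist_comm (u := q)] at this
    omega
  have htree : (T.dist (f u) (f v) : ℝ) ≤ 2 * (K + C) + 1 := by
    have htri' : (T.dist (f u) (f v) : ℝ) ≤ T.dist (f u) p + T.dist p q + T.dist (f v) q := by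
      exact_mod_cast htri
    have hpq' : (T.dist p q : ℝ) ≤ 1 := by exact_mod_cast hpq
    linarith
  have hlow : dist u v / K ≤ T.dist (f u) (f v) + C := by linarith [(hf u v).1]
  calc dist u v = K * (dist u v / K) := by field_simp
    _ ≤ K * (2 * (K + C) + 1 + C) := by gcongr; linarith

end TreeQuasiIsometry

theorem stmt_3 (X : Type) [MetricSpace X]
    -- X is geodesic
    (hgeo : ∀ x y : X, ∃ σ : ℝ → X, σ 0 = x ∧ σ (dist x y) = y ∧
      ∀ s ∈ Set.Icc (0:ℝ) (dist x y), ∀ t ∈ Set.Icc (0:ℝ) (dist x y),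
        dist (σ s) (σ t) = |s - t|)
    -- there is a quasi-isometry from X to a simplicial tree
    (hqt : ∃ (V : Type) (T : SimpleGraph V), T.IsTree ∧
      ∃ (f : X → V) (K C : ℝ), 1 ≤ K ∧ 0 ≤ C ∧
        (∀ x₁ x₂ : X, dist x₁ x₂ / K - C ≤ (T.dist (f x₁) (f x₂) : ℝ) ∧
          (T.dist (f x₁) (f x₂) : ℝ) ≤ K * dist x₁ x₂ + C) ∧
        (∀ v : V, ∃ x : X, (T.dist v (f x) : ℝ) ≤ C)) :
    ∃ δ : ℝ, 0 < δ ∧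
      ∀ x y z w : X,
        min ((dist x w + dist z w - dist x z) / 2)
            ((dist y w + dist z w - dist y z) / 2) - δ
          ≤ (dist x w + dist y w - dist x y) / 2 := by
  obtain ⟨V, T, hT, f, K, C, hK, hC, hf, -⟩ := hqt
  have hKpos : 0 < K := by linarith
  refine ⟨K * (2 * (K + C) + 1 + C), by positivity, fun x y z w => ?_⟩
  have hpath (a b : X) : ∃ P : T.Walk (f a) (f b), P.IsPath :=
    (hT.connected.exists_path_of_dist _ _).imp fun _ h => h.1
  choose P hP using hpath
  rcases hT.isAcyclic.crossing_walks_close (P x z) (hP y w) (P x w) (P y z) with hclose | hclose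
  · obtain ⟨u, v, hu, hv, huv⟩ :=
      exists_close_between_of_close_paths hT hKpos hf (hgeo x z) (hgeo y w) (hP x z) (hP y w)
        hclose
    refine (sub_le_sub_right (min_le_left _ _) _).trans ?_
    linarith [dist_add_dist_le_of_between hu hv]
  · obtain ⟨u, v, hu, hv, huv⟩ :=
      exists_close_between_of_close_paths hT hKpos hf (hgeo x w) (hgeo y z) (hP x w) (hP y z)
        hclose
    refine (sub_le_sub_right (min_le_right _ _) _).trans ?_
    linarith [dist_add_dist_le_of_between hu hv, dist_comm w z]
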